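/- Let A be the evolution algebra over R = ℤ/36ℤ with basis x_1, x_2 and structure coefficient matrix C = [[6, 2], [2, 12]] (so x_1·x_1 = 6x_1 + 2x_2 and x_2·x_2 = 2x_1 + 12x_2). Then A is not nilpotent (for every n ≥ 2 the alternating coefficient product C(2,1)·C(1,2)·C(2,1)⋯ of n−1 factors equals 2^{n-1} ≠ 0 in ℤ/36ℤ), and moreover A is not nil: the element a = x_1 + x_2 satisfies a^n ≠ 0 for every n ≥ 1. (Example 3.2) -/

import Mathlib

/-!
Evolution algebra over `R = ℤ/36ℤ` on the basis `x_1, x_2` (the standard basis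
of `Fin 2 → ZMod 36`), with structure coefficient matrix
`C = !![6, 2; 2, 12]`, so `x_1·x_1 = 6x_1 + 2x_2` and `x_2·x_2 = 2x_1 + 12x_2`;
concretely `(a · b)(k) = ∑_i a(i) * b(i) * C(k,i)`.
-/
def evolMulFin {R : Type*} [CommRing R] {N : ℕ} (C : Matrix (Fin N) (Fin N) R)
    (a b : Fin N → R) : Fin N → R :=
  fun k => ∑ i, a i * b i * C k i

/-- Principal powers: `ppow mul a n = aⁿ` for `n ≥ 1`, defined by
`a^1 = a` and `a^{n+1} = a^n · a`. -/
def ppow {A : Type*} (mul : A → A → A) (a : A) : ℕ → A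
  | 0 => a
  | 1 => a
  | n + 2 => mul (ppow mul a (n + 1)) a

/-- Left-normed products: `lnp mul f m = ((f 0 · f 1) · f 2) ⋯ · f m`
is the left-normed product of the `m + 1` elements `f 0, …, f m`. -/
def lnp {A : Type*} (mul : A → A → A) (f : ℕ → A) : ℕ → A
  | 0 => f 0
  | m + 1 => mul (lnp mul f m) (f (m + 1))

/-- The structure coefficient matrix of Example 3.2. -/
def C36 : Matrix (Fin 2) (Fin 2) (ZMod 36) := !![6, 2; 2, 12]

/-!
The alternating left-normed product `x_1 x_1 x_2 x_1 x_2 ⋯` picks up one off-diagonal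
coefficient `2` per factor, so it equals `2^{n-1}` times a column of `C` and never vanishes:
`3` divides `36` but no power of `2`.

For non-nilness, right multiplication by `a = x_1 + x_2` is the linear map `v ↦ C v`, so
`a^{n+1} = Cⁿ a`. Multiplying by `adj(Cⁿ)` turns `Cⁿ a = 0` into `(det C)ⁿ a = 0`, impossible
since `det C = 68` is prime to `3`.
-/

open Finset Matrix

theorem ZMod.natCast_pow_ne_zero_of_prime_dvd {n m p : ℕ} (hp : p.Prime) (hpn : p ∣ n)
    (hpm : ¬ p ∣ m) (k : ℕ) : (m : ZMod n) ^ k ≠ 0 := by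
  rw [← Nat.cast_pow, Ne, ZMod.natCast_eq_zero_iff]
  exact fun hn => hpm (hp.dvd_of_dvd_pow (hpn.trans hn))

theorem Matrix.det_smul_eq_zero_of_mulVec_eq_zero {ι R : Type*} [Fintype ι] [DecidableEq ι]
    [CommRing R] {M : Matrix ι ι R} {v : ι → R} (h : M *ᵥ v = 0) : M.det • v = 0 := by
  rw [← one_mulVec v, ← smul_mulVec, ← adjugate_mul, ← mulVec_mulVec, h, mulVec_zero]

section EvolutionAlgebra

variable {R : Type*} [CommRing R] {N : ℕ} (C : Matrix (Fin N) (Fin N) R)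

theorem evolMulFin_eq_mulVec (a b : Fin N → R) : evolMulFin C a b = C *ᵥ (a * b) := by
  ext k
  simp only [evolMulFin, mulVec, dotProduct, Pi.mul_apply, mul_comm]

theorem evolMulFin_single (v : Fin N → R) (i : Fin N) :
    evolMulFin C v (Pi.single i 1) = fun k => v i * C k i := by
  ext k
  simp [evolMulFin, Pi.single_apply]

theorem ppow_evolMulFin_one_succ (n : ℕ) :
    ppow (evolMulFin C) (fun _ => 1) (n + 1) = C ^ n *ᵥ fun _ => 1 := by
  induction n with
  | zero => simp [ppow]
  | succ n ih =>
    change evolMulFin C (ppow (evolMulFin C) (fun _ => 1) (n + 1)) (fun _ => 1) = _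
    rw [ih, evolMulFin_eq_mulVec, pow_succ', ← mulVec_mulVec]
    exact congrArg (C *ᵥ ·) (mul_one _)

theorem lnp_evolMulFin_of_single {f : ℕ → Fin N → R} {g : ℕ → Fin N}
    (hf : ∀ i, f (i + 1) = Pi.single (g i) 1) (m : ℕ) :
    lnp (evolMulFin C) f (m + 1)
      = fun k => f 0 (g 0) * (∏ j ∈ range m, C (g (j + 1)) (g j)) * C k (g m) := by
  induction m with
  | zero => simp [lnp, hf, evolMulFin_single]
  | succ m ih =>
    change evolMulFin C (lnp (evolMulFin C) f (m + 1)) (f (m + 2)) = _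
    rw [hf, ih, evolMulFin_single, prod_range_succ]
    ext k
    ring

end EvolutionAlgebra

theorem C36_succ_self (i : Fin 2) : C36 (i + 1) i = 2 := by
  revert i; decide

theorem det_C36 : C36.det = ((68 : ℕ) : ZMod 36) := by
  rw [C36, det_fin_two_of]; decide

theorem det_C36_pow_ne_zero (n : ℕ) : C36.det ^ n ≠ 0 := by
  rw [det_C36]
  exact ZMod.natCast_pow_ne_zero_of_prime_dvd Nat.prime_three (by norm_num) (by norm_num) n

theorem two_pow_ne_zero_zmod36 (k : ℕ) : (2 : ZMod 36) ^ k ≠ 0 := by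
  exact_mod_cast ZMod.natCast_pow_ne_zero_of_prime_dvd Nat.prime_three (by norm_num)
    (by norm_num : ¬ 3 ∣ 2) k

open Fin.NatCast in
theorem lnp_alternating_ne_zero (m : ℕ) :
    lnp (evolMulFin C36) (fun i => Pi.single ((i - 1 : ℕ) : Fin 2) 1) (m + 1) ≠ 0 := by
  rw [lnp_evolMulFin_of_single C36 (g := fun i => (i : Fin 2)) (fun i => rfl)]
  intro h
  have hcoord := congrFun h ((m + 1 : ℕ) : Fin 2)
  simp only [Nat.cast_succ, C36_succ_self, prod_const, card_range, Pi.zero_apply] at hcoord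
  exact two_pow_ne_zero_zmod36 (m + 1) (by simpa [pow_succ] using hcoord)

theorem example_3_2_not_nilpotent_not_nil :
    (∀ n : ℕ, 2 ≤ n → (2 : ZMod 36) ^ (n - 1) ≠ 0) ∧
    ¬ (∃ n : ℕ, 2 ≤ n ∧
        ∀ f : ℕ → (Fin 2 → ZMod 36), lnp (evolMulFin C36) f (n - 1) = 0) ∧
    (∀ n : ℕ, 1 ≤ n →
        ppow (evolMulFin C36) (fun _ => (1 : ZMod 36)) n ≠ 0) := by
  refine ⟨fun n _ => two_pow_ne_zero_zmod36 (n - 1), ?_, ?_⟩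
  · rintro ⟨n, hn, hnil⟩
    obtain ⟨m, rfl⟩ := Nat.exists_eq_add_of_le' hn
    exact lnp_alternating_ne_zero m (hnil _)
  · intro n hn hnil
    obtain ⟨n, rfl⟩ := Nat.exists_eq_add_of_le' hn
    rw [ppow_evolMulFin_one_succ] at hnil
    have hdet := congrFun (det_smul_eq_zero_of_mulVec_eq_zero hnil) 0
    rw [det_pow, Pi.smul_apply, smul_eq_mul, mul_one] at hdet
    exact det_C36_pow_ne_zero n hdet
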